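/- Let R be a commutative ring of characteristic p > 0 and n ≥ 0. The set U_n(R) = {1 + ∑_{i=1}^n λ_i F^i in R[F;σ] : λ_i^{p^{n-i+1}} = 0 for all 1 ≤ i ≤ n} is a subgroup of the group of units of the skew polynomial ring R[F;σ]. -/
import Mathlib


/-- Multiplication in the skew polynomial ring `R[F;σ]`, `F·λ = λ^p·F`. -/
def skewMul {R : Type*} [CommRing R] (p : ℕ) (P Q : ℕ → R) : ℕ → R :=
  fun k => ∑ i ∈ Finset.range (k + 1), P i * (Q (k - i)) ^ (p ^ i)

/-- The unit element of the skew polynomial ring. -/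
def skewOne (R : Type*) [CommRing R] : ℕ → R := fun k => if k = 0 then 1 else 0

/-- Membership in `U_n(R) = {1 + ∑_{i=1}^n λ_i F^i : λ_i^{p^{n-i+1}} = 0}`. -/
def memU {R : Type*} [CommRing R] (p n : ℕ) (P : ℕ → R) : Prop :=
  P 0 = 1 ∧ (∀ i, 1 ≤ i → i ≤ n → P i ^ (p ^ (n - i + 1)) = 0) ∧
    ∀ i, n < i → P i = 0

section Aux

variable {R : Type*} [CommRing R]

/-- The recursively defined right inverse of `P` (assuming `P 0 = 1`). -/
noncomputable def skewInv (p : ℕ) (P : ℕ → R) : ℕ → R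
  | 0 => 1
  | (k+1) => -∑ i ∈ Finset.range (k+1),
      P (i+1) * (skewInv p P (k - i)) ^ (p ^ (i+1))
  decreasing_by exact Nat.lt_succ_of_le (Nat.sub_le _ _)

lemma frob_sum (p : ℕ) (hp : p.Prime) [CharP R p] (e : ℕ) {α : Type*}
    (s : Finset α) (f : α → R) :
    (∑ i ∈ s, f i) ^ p ^ e = ∑ i ∈ s, f i ^ p ^ e := by
  haveI := Fact.mk hp
  exact sum_pow_char_pow (p := p) (n := e) s f

lemma frob_neg (p : ℕ) (hp : p.Prime) [CharP R p] (e : ℕ) (x : R) :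
    (-x) ^ p ^ e = -(x ^ p ^ e) := by
  haveI := Fact.mk hp
  simpa [zero_pow (pow_ne_zero e hp.ne_zero)] using
    sub_pow_char_pow (p := p) (0 : R) x (n := e)

/-- Each term of a product, raised to `p^(n-k+1)`, vanishes, for `1 ≤ k ≤ n`. -/
lemma key1 {p n i j k : ℕ} (hp : p.Prime) [CharP R p] {P Q : ℕ → R}
    (hij : i + j = k) (hk1 : 1 ≤ k) (hkn : k ≤ n)
    (hP : 1 ≤ i → i ≤ n → P i ^ p ^ (n - i + 1) = 0)
    (hQ0 : Q 0 = 1)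
    (hQ : 1 ≤ j → j ≤ n → Q j ^ p ^ (n - j + 1) = 0) :
    (P i * Q j ^ p ^ i) ^ p ^ (n - k + 1) = 0 := by
  rcases Nat.eq_zero_or_pos j with hj | hj
  · subst hj
    have hi : i = k := by omega
    subst hi
    rw [hQ0, one_pow, mul_one, hP hk1 hkn]
  · have hjn : j ≤ n := by omega
    have h1 : (Q j ^ p ^ i) ^ p ^ (n - k + 1) = 0 := by
      rw [← pow_mul, ← pow_add]
      have he' : i + (n - k + 1) = (n - j + 1) + (i + (n - k + 1) - (n - j + 1)) := by
        omega
      rw [he', pow_add, pow_mul, hQ hj hjn, zero_pow (pow_ne_zero _ hp.ne_zero)]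
    rw [mul_pow, h1, mul_zero]

/-- Each term of a product vanishes in degree `k > n`. -/
lemma key2 {p n i j k : ℕ} (hp : p.Prime) [CharP R p] {P Q : ℕ → R}
    (hij : i + j = k) (hkn : n < k)
    (hPn : n < i → P i = 0)
    (hQn : n < j → Q j = 0)
    (hQ : 1 ≤ j → j ≤ n → Q j ^ p ^ (n - j + 1) = 0) :
    P i * Q j ^ p ^ i = 0 := by
  rcases lt_or_ge n i with hi | hi
  · rw [hPn hi, zero_mul]
  · have hj1 : 1 ≤ j := by omega
    rcases lt_or_ge n j with hj | hj
    · rw [hQn hj, zero_pow (pow_ne_zero _ hp.ne_zero), mul_zero]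
    · have : Q j ^ p ^ i = 0 := by
        have he : i = (n - j + 1) + (i - (n - j + 1)) := by omega
        rw [he, pow_add, pow_mul, hQ hj1 hj, zero_pow (pow_ne_zero _ hp.ne_zero)]
      rw [this, mul_zero]

lemma skewMul_one (p : ℕ) (hp : p ≠ 0) (P : ℕ → R) : skewMul p P (skewOne R) = P := by
  funext k
  unfold skewMul skewOne
  rw [Finset.sum_eq_single_of_mem k (Finset.self_mem_range_succ k)]
  · simp
  · intro i hi hne
    simp only [Finset.mem_range] at hi
    rw [if_neg (by omega), zero_pow (pow_ne_zero _ hp), mul_zero]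

lemma one_skewMul (p : ℕ) (P : ℕ → R) : skewMul p (skewOne R) P = P := by
  funext k
  unfold skewMul skewOne
  rw [Finset.sum_eq_single_of_mem 0 (Finset.mem_range.2 (by omega))]
  · simp
  · intro i hi hne
    rw [if_neg hne, zero_mul]

lemma skewMul_assoc (p : ℕ) (hp : p.Prime) [CharP R p] (P Q S : ℕ → R) :
    skewMul p (skewMul p P Q) S = skewMul p P (skewMul p Q S) := by
  funext k
  unfold skewMul
  have hR : ∀ i ∈ Finset.range (k+1),
      P i * (∑ j ∈ Finset.range (k - i + 1), Q j * S (k - i - j) ^ p ^ j) ^ p ^ i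
      = ∑ j ∈ Finset.range (k - i + 1),
          P i * (Q (i + j - i) ^ p ^ i * S (k - (i + j)) ^ p ^ (i + j)) := by
    intro i hi
    rw [frob_sum p hp, Finset.mul_sum]
    refine Finset.sum_congr rfl fun j hj => ?_
    simp only [Finset.mem_range] at hi hj
    rw [mul_pow, ← pow_mul, ← pow_add,
      show i + j - i = j from by omega, show k - (i + j) = k - i - j from by omega,
      Nat.add_comm j i]
  rw [Finset.sum_congr rfl hR]
  have hL : ∀ m ∈ Finset.range (k+1),
      (∑ i ∈ Finset.range (m + 1), P i * Q (m - i) ^ p ^ i) * S (k - m) ^ p ^ m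
      = ∑ i ∈ Finset.range (m + 1),
          P i * (Q (m - i) ^ p ^ i * S (k - m) ^ p ^ m) := by
    intro m _
    rw [Finset.sum_mul]
    exact Finset.sum_congr rfl fun i _ => by ring
  rw [Finset.sum_congr rfl hL]
  rw [Finset.sum_comm' (t' := Finset.range (k+1))
    (s' := fun i => Finset.Ico i (k+1))
    (by intro m i; simp only [Finset.mem_range, Finset.mem_Ico]; omega)]
  refine Finset.sum_congr rfl fun i hi => ?_
  simp only [Finset.mem_range] at hi
  rw [Finset.sum_Ico_eq_sum_range, show k + 1 - i = k - i + 1 from by omega]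

end Aux

/-- `U_n(R)` is a subgroup of the unit group of `R[F;σ]`: it contains `1`, is
closed under multiplication, and every element has an inverse lying in `U_n(R)`. -/
theorem memU_subgroup {R : Type*} [CommRing R] (p : ℕ) (hp : p.Prime)
    [CharP R p] (n : ℕ) :
    memU p n (skewOne R) ∧
    (∀ P Q : ℕ → R, memU p n P → memU p n Q → memU p n (skewMul p P Q)) ∧
    (∀ P : ℕ → R, memU p n P → ∃ Q : ℕ → R, memU p n Q ∧
      skewMul p P Q = skewOne R ∧ skewMul p Q P = skewOne R) := by
  have hmul : ∀ P Q : ℕ → R, memU p n P → memU p n Q → memU p n (skewMul p P Q) := by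
    intro P Q ⟨hP0, hPnil, hPtop⟩ ⟨hQ0, hQnil, hQtop⟩
    refine ⟨?_, ?_, ?_⟩
    · unfold skewMul
      simp [hP0, hQ0]
    · intro k hk1 hkn
      unfold skewMul
      rw [frob_sum p hp]
      refine Finset.sum_eq_zero fun i hi => ?_
      simp only [Finset.mem_range] at hi
      exact key1 hp (by omega) hk1 hkn (hPnil i) hQ0 (hQnil (k - i))
    · intro k hk
      unfold skewMul
      refine Finset.sum_eq_zero fun i hi => ?_
      simp only [Finset.mem_range] at hi
      exact key2 hp (by omega) hk (hPtop i) (hQtop (k - i)) (hQnil (k - i))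
  have hone : memU p n (skewOne R) := by
    refine ⟨rfl, fun i h1 _ => ?_, fun i h => ?_⟩
    · unfold skewOne
      rw [if_neg (by omega), zero_pow (pow_ne_zero _ hp.ne_zero)]
    · unfold skewOne
      rw [if_neg (by omega)]
  refine ⟨hone, hmul, ?_⟩
  intro P ⟨hP0, hPnil, hPtop⟩
  have hinv0 : ∀ P' : ℕ → R, skewInv p P' 0 = 1 := fun P' => by rw [skewInv]
  have hinvsucc : ∀ (P' : ℕ → R) (m : ℕ), skewInv p P' (m+1) =
      -∑ i ∈ Finset.range (m+1), P' (i+1) * (skewInv p P' (m - i)) ^ (p ^ (i+1)) :=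
    fun P' m => by rw [skewInv]
  -- the recursive inverse is always a right inverse
  have hrinv : ∀ P' : ℕ → R, P' 0 = 1 → skewMul p P' (skewInv p P') = skewOne R := by
    intro P' hP'0
    funext k
    cases k with
    | zero => simp [skewMul, skewOne, hinv0 P', hP'0]
    | succ m =>
      unfold skewMul skewOne
      rw [if_neg (Nat.succ_ne_zero m), Finset.sum_range_succ']
      simp only [pow_zero, pow_one, hP'0, one_mul, Nat.sub_zero, Nat.succ_sub_succ]
      rw [hinvsucc P' m]
      ring
  set Q := skewInv p P with hQdef
  have hQ0 : Q 0 = 1 := hinv0 P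
  -- Q ∈ U_n by strong induction
  have hQmem : ∀ k, (1 ≤ k → k ≤ n → Q k ^ p ^ (n - k + 1) = 0) ∧ (n < k → Q k = 0) := by
    intro k
    induction k using Nat.strong_induction_on with
    | _ k IH =>
      cases k with
      | zero => exact ⟨fun h => absurd h (by omega), fun h => absurd h (by omega)⟩
      | succ m =>
        have hQsucc : Q (m+1) =
            -∑ i ∈ Finset.range (m+1), P (i+1) * (Q (m - i)) ^ (p ^ (i+1)) :=
          hinvsucc P m
        constructor
        · intro hk1 hkn
          rw [hQsucc, frob_neg p hp, frob_sum p hp, Finset.sum_eq_zero, neg_zero]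
          intro i hi
          simp only [Finset.mem_range] at hi
          exact key1 hp (by omega) hk1 hkn (hPnil (i+1)) hQ0
            (fun h1 h2 => (IH (m - i) (by omega)).1 h1 h2)
        · intro hk
          rw [hQsucc, Finset.sum_eq_zero, neg_zero]
          intro i hi
          simp only [Finset.mem_range] at hi
          exact key2 hp (by omega) hk (hPtop (i+1))
            (fun h => (IH (m - i) (by omega)).2 h)
            (fun h1 h2 => (IH (m - i) (by omega)).1 h1 h2)
  have hQmemU : memU p n Q :=
    ⟨hQ0, fun i h1 h2 => (hQmem i).1 h1 h2, fun i h => (hQmem i).2 h⟩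
  have hPQ : skewMul p P Q = skewOne R := hrinv P hP0
  -- left inverse via associativity
  have hQP : skewMul p Q P = skewOne R := by
    have hQP' : skewMul p Q (skewInv p Q) = skewOne R := hrinv Q hQ0
    have hP : P = skewInv p Q := by
      calc P = skewMul p P (skewMul p Q (skewInv p Q)) := by
              rw [hQP', skewMul_one p hp.ne_zero]
        _ = skewMul p (skewMul p P Q) (skewInv p Q) := (skewMul_assoc p hp P Q _).symm
        _ = skewInv p Q := by rw [hPQ, one_skewMul]
    rw [hP, hQP']
  exact ⟨Q, hQmemU, hPQ, hQP⟩
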